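/- For c ∈ ℝ let P'(c) = {y ∈ ℝ⁴ : −y₁−y₂−2y₄ ≤ 1/2, y₁−2y₄ ≤ 1/2, y₂−2y₄ ≤ 1/2, −y₃+3y₄ ≤ c, y₃+3y₄ ≤ c, 6y₄ ≤ 1/2, −6y₄ ≤ 1/2}, and for a compact convex set P ⊆ ℝ⁴ with nonempty interior let b(P) = (∫_P y dy)/(∫_P dy) ∈ ℝ⁴ denote its normalized barycenter. Set c₀ = 1/2 + (1/4)·√(5/7). Then c₀ and 1 − c₀ both lie in (1/4, 3/4), and b(P'(c₀)) + b(P'(1 − c₀)) = 0. -/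

import Mathlib

open MeasureTheory

/-- The polytope `P'(c) ⊆ ℝ⁴` of the divisor `D(c)` after the linear change of
coordinates used in the paper. -/
def Pprime (c : ℝ) : Set (EuclideanSpace ℝ (Fin 4)) :=
  {y | -y 0 - y 1 - 2 * y 3 ≤ 1/2 ∧ y 0 - 2 * y 3 ≤ 1/2 ∧ y 1 - 2 * y 3 ≤ 1/2 ∧
       -y 2 + 3 * y 3 ≤ c ∧ y 2 + 3 * y 3 ≤ c ∧
       6 * y 3 ≤ 1/2 ∧ -(6 * y 3) ≤ 1/2}

/-- The normalized barycenter `b(P) = (∫_P dy)⁻¹ ∫_P y dy` of a set `P ⊆ ℝ⁴`. -/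
noncomputable def bary (P : Set (EuclideanSpace ℝ (Fin 4))) :
    EuclideanSpace ℝ (Fin 4) :=
  (∫ y in P, (1 : ℝ))⁻¹ • ∫ y in P, y

/-! The linear map `(y₁, y₂, y₃, y₄) ↦ (y₂, -y₁ - y₂, -y₃, y₄)` has determinant `-1` and maps
`P'(c)` onto itself, so the barycenter of `P'(c)` lies on the `y₄`-axis (Lean's coordinate `y 3`).
For `c ≥ 1/4` the slice `y₄ = t` of `P'(c)` is a triangle of area `9(1 + 4t)²/8` times a segment
of length `2(c - 3t)`, which gives `vol P'(c) = 7c/18 - 1/48` and `∫_{P'(c)} y₄ = c/144 - 1/360`,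
hence `b(P'(c)) = (5c - 2)/(5(56c - 3)) e₄`. The two barycenters cancel exactly when
`112c² - 112c + 23 = 0`, whose roots are `1/2 ± (1/4)√(5/7)`. -/

open Set

lemma MeasurableEquiv.piFinSuccAbove_zero_symm_apply {α : Type*} [MeasurableSpace α] {n : ℕ}
    (p : α × (Fin n → α)) :
    (MeasurableEquiv.piFinSuccAbove (fun _ : Fin (n + 1) => α) 0).symm p = Fin.cons p.1 p.2 := by
  simp [MeasurableEquiv.piFinSuccAbove_symm_apply, Fin.insertNthEquiv, Fin.insertNth_zero']

namespace MeasureTheory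

variable {α E : Type*} [MeasureSpace α] [NormedAddCommGroup E]

lemma Integrable.comp_finCons [SigmaFinite (volume : Measure α)] {n : ℕ}
    {g : (Fin (n + 1) → α) → E} (hg : Integrable g) :
    Integrable (fun p : α × (Fin n → α) => g (Fin.cons p.1 p.2)) (volume.prod volume) := by
  have he := (volume_preserving_piFinSuccAbove (fun _ : Fin (n + 1) => α) 0).symm
  rw [← Measure.volume_eq_prod]
  rw [← he.integrable_comp_emb (MeasurableEquiv.measurableEmbedding _)] at hg
  simpa only [Function.comp_def, MeasurableEquiv.piFinSuccAbove_zero_symm_apply] using hg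

variable [NormedSpace ℝ E]

lemma integral_fin_one (g : (Fin 1 → α) → E) : ∫ x, g x = ∫ t : α, g (fun _ => t) :=
  (((volume_preserving_funUnique (Fin 1) α).symm _).integral_comp' g).symm

lemma integral_ite_and_mem_Icc (P : Prop) [Decidable P] (l u : ℝ) (F : ℝ → E) :
    ∫ a, (if P ∧ a ∈ Icc l u then F a else 0) = if P then ∫ a in Icc l u, F a else 0 := by
  by_cases hP : P
  · simp only [hP, true_and, if_true, ← integral_indicator measurableSet_Icc, indicator_apply]
  · simp [hP]

variable [SigmaFinite (volume : Measure α)]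

lemma Integrable.integral_finCons {n : ℕ} {g : (Fin (n + 1) → α) → E} (hg : Integrable g) :
    Integrable (fun v : Fin n → α => ∫ a : α, g (Fin.cons a v)) :=
  hg.comp_finCons.integral_prod_right

lemma integral_eq_integral_integral_finCons {n : ℕ} {g : (Fin (n + 1) → α) → E}
    (hg : Integrable g) : ∫ x, g x = ∫ v : Fin n → α, ∫ a : α, g (Fin.cons a v) := by
  have he := (volume_preserving_piFinSuccAbove (fun _ : Fin (n + 1) => α) 0).symm
  rw [← he.integral_comp', Measure.volume_eq_prod]
  simp only [MeasurableEquiv.piFinSuccAbove_zero_symm_apply]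
  exact integral_prod_symm _ hg.comp_finCons

lemma integral_fin_four_eq_iterated {g : (Fin 4 → α) → E} (hg : Integrable g) :
    ∫ x, g x = ∫ t : α, ∫ z : α, ∫ b : α, ∫ a : α, g ![a, b, z, t] := by
  rw [integral_eq_integral_integral_finCons hg,
    integral_eq_integral_integral_finCons hg.integral_finCons,
    integral_eq_integral_integral_finCons hg.integral_finCons.integral_finCons, integral_fin_one]
  have hvec (a b z t : α) :
      (Fin.cons a (Fin.cons b (Fin.cons z fun _ => t)) : Fin 4 → α) = ![a, b, z, t] := by
    ext i; fin_cases i <;> rfl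
  simp only [hvec]

end MeasureTheory

section Symmetry

variable {F : Type*} [NormedAddCommGroup F] [NormedSpace ℝ F] [MeasurableSpace F] [BorelSpace F]
  [FiniteDimensional ℝ F] {μ : Measure F} [μ.IsAddHaarMeasure]

lemma ContinuousLinearMap.measurePreserving_of_abs_det_eq_one (f : F →L[ℝ] F)
    (hf : |LinearMap.det (f : F →ₗ[ℝ] F)| = 1) : MeasurePreserving f μ μ := by
  refine ⟨f.continuous.measurable, ?_⟩
  rw [← f.coe_coe, Measure.map_linearMap_addHaar_eq_smul_addHaar μ
    (by rw [← abs_ne_zero, hf]; exact one_ne_zero), abs_inv, hf]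
  simp

lemma ContinuousLinearMap.map_setIntegral_id_of_preimage_eq (f : F →L[ℝ] F)
    (hf : |LinearMap.det (f : F →ₗ[ℝ] F)| = 1) {s : Set F} (hs : MeasurableSet s)
    (hfs : f ⁻¹' s = s) (hint : IntegrableOn (fun x => x) s μ) :
    f (∫ x in s, x ∂μ) = ∫ x in s, x ∂μ := by
  have hmap : (μ.restrict s).map f = μ.restrict s := by
    simpa only [hfs] using ((f.measurePreserving_of_abs_det_eq_one hf).restrict_preimage hs).map_eq
  rw [← f.integral_comp_comm hint]
  conv_rhs => rw [← hmap]
  exact (integral_map f.continuous.aemeasurable aestronglyMeasurable_id).symm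

end Symmetry

lemma integral_quartic (p₀ p₁ p₂ p₃ p₄ a b : ℝ) :
    ∫ x in a..b, (p₀ + p₁ * x + p₂ * x ^ 2 + p₃ * x ^ 3 + p₄ * x ^ 4) =
      p₀ * (b - a) + p₁ * (b ^ 2 - a ^ 2) / 2 + p₂ * (b ^ 3 - a ^ 3) / 3 +
        p₃ * (b ^ 4 - a ^ 4) / 4 + p₄ * (b ^ 5 - a ^ 5) / 5 := by
  have hmono (n : ℕ) (p x : ℝ) :
      HasDerivAt (fun x => p * x ^ (n + 1) / (n + 1)) (p * x ^ n) x := by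
    refine (((hasDerivAt_pow (n + 1) x).const_mul p).div_const ((n : ℝ) + 1)).congr_deriv ?_
    rw [Nat.add_sub_cancel]
    push_cast
    field_simp
  have hderiv (x : ℝ) := ((((hmono 0 p₀ x).fun_add (hmono 1 p₁ x)).fun_add
    (hmono 2 p₂ x)).fun_add (hmono 3 p₃ x)).fun_add (hmono 4 p₄ x)
  norm_num at hderiv
  rw [intervalIntegral.integral_eq_sub_of_hasDerivAt (fun x _ => hderiv x)
    (Continuous.intervalIntegrable (by fun_prop) a b)]
  ring

lemma mem_preimage_Pprime_iff (c a b z t : ℝ) :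
    ![a, b, z, t] ∈ WithLp.toLp 2 ⁻¹' Pprime c ↔
      ((t ∈ Icc (-(1/12)) (1/12) ∧ z ∈ Icc (3 * t - c) (c - 3 * t)) ∧
        b ∈ Icc (-(1 + 4 * t)) (1/2 + 2 * t)) ∧ a ∈ Icc (-(1/2 + 2 * t) - b) (1/2 + 2 * t) := by
  simp only [Pprime, mem_preimage, mem_ofPred_eq, mem_Icc, Matrix.cons_val]
  constructor
  · rintro ⟨h₁, h₂, h₃, h₄, h₅, h₆, h₇⟩
    refine ⟨⟨⟨⟨?_, ?_⟩, ?_, ?_⟩, ?_, ?_⟩, ?_, ?_⟩ <;> linarith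
  · rintro ⟨⟨⟨⟨h₁, h₂⟩, h₃, h₄⟩, h₅, h₆⟩, h₇, h₈⟩
    refine ⟨?_, ?_, ?_, ?_, ?_, ?_, ?_⟩ <;> linarith

lemma isCompact_preimage_Pprime (c : ℝ) :
    IsCompact (WithLp.toLp 2 ⁻¹' Pprime c : Set (Fin 4 → ℝ)) := by
  have hclosed : IsClosed (WithLp.toLp 2 ⁻¹' Pprime c : Set (Fin 4 → ℝ)) := by
    simp only [Pprime, ofPred_and]
    repeat' apply IsClosed.inter
    all_goals exact isClosed_le (by fun_prop) (by fun_prop)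
  refine (isCompact_univ_pi fun _ => isCompact_Icc (a := -(|c| + 2)) (b := |c| + 2))
    |>.of_isClosed_subset hclosed ?_
  rintro x ⟨h₁, h₂, h₃, h₄, h₅, h₆, h₇⟩ i -
  have := neg_abs_le c
  have := le_abs_self c
  fin_cases i <;> simp only [Fin.zero_eta, Fin.mk_one, Fin.reduceFinMk, mem_Icc] <;>
    constructor <;> linarith

lemma isCompact_Pprime (c : ℝ) : IsCompact (Pprime c) := by
  simpa only [image_preimage_eq _ (WithLp.toLp_surjective 2)] using
    (isCompact_preimage_Pprime c).image (PiLp.continuous_toLp 2 _)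

lemma measurableSet_Pprime (c : ℝ) : MeasurableSet (Pprime c) :=
  (isCompact_Pprime c).isClosed.measurableSet

lemma integrableOn_Pprime_id (c : ℝ) :
    IntegrableOn (fun y => y) (Pprime c) (volume : Measure (EuclideanSpace ℝ (Fin 4))) :=
  continuous_id.continuousOn.integrableOn_compact (isCompact_Pprime c)

lemma setIntegral_Pprime_eq_iterated {E : Type*} [NormedAddCommGroup E] [NormedSpace ℝ E]
    (c : ℝ) {f : EuclideanSpace ℝ (Fin 4) → E} (hf : ContinuousOn f (Pprime c)) :
    ∫ y in Pprime c, f y =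
      ∫ t in Icc (-(1/12)) (1/12), ∫ z in Icc (3 * t - c) (c - 3 * t),
        ∫ b in Icc (-(1 + 4 * t)) (1/2 + 2 * t), ∫ a in Icc (-(1/2 + 2 * t) - b) (1/2 + 2 * t),
          f !₂[a, b, z, t] := by
  have hmeas := (isCompact_preimage_Pprime c).isClosed.measurableSet
  have hint :
      Integrable ((WithLp.toLp 2 ⁻¹' Pprime c).indicator fun x => f (WithLp.toLp 2 x)) := by
    rw [integrable_indicator_iff hmeas]
    exact (hf.comp (PiLp.continuous_toLp 2 _).continuousOn (mapsTo_preimage _ _))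
      |>.integrableOn_compact (isCompact_preimage_Pprime c)
  rw [← (PiLp.volume_preserving_toLp (Fin 4)).setIntegral_preimage_emb
    (MeasurableEquiv.toLp 2 (Fin 4 → ℝ)).measurableEmbedding, ← integral_indicator hmeas,
    integral_fin_four_eq_iterated hint]
  classical
  simp only [indicator_apply, mem_preimage_Pprime_iff, integral_ite_and_mem_Icc]
  rw [← integral_indicator measurableSet_Icc]
  simp only [indicator_apply]

lemma setIntegral_Pprime_comp_apply_three {c : ℝ} (hc : 1/4 ≤ c) {g : ℝ → ℝ}
    (hg : Continuous g) :
    ∫ y in Pprime c, g (y 3) =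
      ∫ t in (-(1/12))..(1/12), 9/4 * (1 + 4 * t) ^ 2 * (c - 3 * t) * g t := by
  rw [setIntegral_Pprime_eq_iterated c (by fun_prop),
    intervalIntegral.integral_of_le (by norm_num), ← integral_Icc_eq_integral_Ioc]
  refine setIntegral_congr_fun measurableSet_Icc fun t ⟨ht₁, ht₂⟩ => ?_
  have hsegment (b : ℝ) (hb : b ∈ Icc (-(1 + 4 * t)) (1/2 + 2 * t)) :
      ∫ a in Icc (-(1/2 + 2 * t) - b) (1/2 + 2 * t), g t = (1 + 4 * t + b) * g t := by
    rw [setIntegral_const, Real.volume_real_Icc_of_le (by linarith [hb.1]), smul_eq_mul]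
    ring
  have htriangle : ∫ b in Icc (-(1 + 4 * t)) (1/2 + 2 * t),
      ∫ a in Icc (-(1/2 + 2 * t) - b) (1/2 + 2 * t), g t = 9/8 * (1 + 4 * t) ^ 2 * g t := by
    rw [setIntegral_congr_fun measurableSet_Icc hsegment, integral_Icc_eq_integral_Ioc,
      ← intervalIntegral.integral_of_le (by linarith), intervalIntegral.integral_mul_const,
      intervalIntegral.integral_comp_add_left (fun x : ℝ => x), integral_id]
    ring
  simp only [Matrix.cons_val]
  rw [htriangle, setIntegral_const, Real.volume_real_Icc_of_le (by linarith), smul_eq_mul]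
  ring

lemma setIntegral_Pprime_one {c : ℝ} (hc : 1/4 ≤ c) :
    ∫ _ in Pprime c, (1 : ℝ) = 7 * c / 18 - 1/48 := by
  rw [setIntegral_Pprime_comp_apply_three hc (g := fun _ => 1) continuous_const]
  rw [show (fun t : ℝ => 9/4 * (1 + 4 * t) ^ 2 * (c - 3 * t) * 1) = fun t =>
    9 * c / 4 + (18 * c - 27/4) * t + (36 * c - 54) * t ^ 2 + (-108) * t ^ 3 + 0 * t ^ 4 from
    funext fun t => by ring, integral_quartic]
  ring

lemma setIntegral_Pprime_apply_three {c : ℝ} (hc : 1/4 ≤ c) :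
    ∫ y in Pprime c, y 3 = c / 144 - 1/360 := by
  rw [setIntegral_Pprime_comp_apply_three hc (g := fun t => t) continuous_id]
  rw [show (fun t : ℝ => 9/4 * (1 + 4 * t) ^ 2 * (c - 3 * t) * t) = fun t =>
    0 + 9 * c / 4 * t + (18 * c - 27/4) * t ^ 2 + (36 * c - 54) * t ^ 3 + (-108) * t ^ 4 from
    funext fun t => by ring, integral_quartic]
  ring

noncomputable def pprimeSymm : EuclideanSpace ℝ (Fin 4) →L[ℝ] EuclideanSpace ℝ (Fin 4) :=
  Matrix.toEuclideanCLM (𝕜 := ℝ) !![0, 1, 0, 0; -1, -1, 0, 0; 0, 0, -1, 0; 0, 0, 0, 1]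

lemma pprimeSymm_apply (y : EuclideanSpace ℝ (Fin 4)) :
    pprimeSymm y = !₂[y 1, -y 0 - y 1, -y 2, y 3] := by
  ext i
  fin_cases i <;> simp [pprimeSymm, Matrix.mulVec, dotProduct, Fin.sum_univ_four, sub_eq_add_neg]

lemma abs_det_pprimeSymm : |LinearMap.det
    (pprimeSymm : EuclideanSpace ℝ (Fin 4) →ₗ[ℝ] EuclideanSpace ℝ (Fin 4))| = 1 := by
  simp only [pprimeSymm, Matrix.coe_toEuclideanCLM_eq_toEuclideanLin, LinearMap.det_toLpLin]
  simp [Matrix.det_succ_row_zero, Fin.sum_univ_succ, Fin.succAbove]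

lemma preimage_pprimeSymm_Pprime (c : ℝ) : pprimeSymm ⁻¹' Pprime c = Pprime c := by
  ext y
  simp only [mem_preimage, pprimeSymm_apply, Pprime, mem_ofPred_eq, Matrix.cons_val]
  constructor
  · rintro ⟨h₁, h₂, h₃, h₄, h₅, h₆, h₇⟩
    refine ⟨?_, ?_, ?_, ?_, ?_, ?_, ?_⟩ <;> linarith
  · rintro ⟨h₁, h₂, h₃, h₄, h₅, h₆, h₇⟩
    refine ⟨?_, ?_, ?_, ?_, ?_, ?_, ?_⟩ <;> linarith

lemma setIntegral_Pprime_apply_eq_zero (c : ℝ) {i : Fin 4} (hi : i ≠ 3) :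
    (∫ y in Pprime c, y) i = 0 := by
  have hfix := pprimeSymm.map_setIntegral_id_of_preimage_eq abs_det_pprimeSymm
    (measurableSet_Pprime c) (preimage_pprimeSymm_Pprime c) (integrableOn_Pprime_id c)
  rw [pprimeSymm_apply] at hfix
  set v := ∫ y in Pprime c, y
  have h₀ : v 1 = v 0 := congrArg (· 0) hfix
  have h₁ : -v 0 - v 1 = v 1 := congrArg (· 1) hfix
  have h₂ : -v 2 = v 2 := congrArg (· 2) hfix
  obtain rfl | rfl | rfl : i = 0 ∨ i = 1 ∨ i = 2 := by fin_cases i <;> simp_all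
  all_goals linarith

lemma setIntegral_Pprime_id {c : ℝ} (hc : 1/4 ≤ c) :
    ∫ y in Pprime c, y = EuclideanSpace.single 3 (c / 144 - 1/360) := by
  ext i
  rw [PiLp.single_apply]
  split_ifs with hi
  · subst hi
    rw [← setIntegral_Pprime_apply_three hc]
    exact ((EuclideanSpace.proj 3).integral_comp_comm (integrableOn_Pprime_id c)).symm
  · exact setIntegral_Pprime_apply_eq_zero c hi

lemma bary_Pprime {c : ℝ} (hc : 1/4 ≤ c) :
    bary (Pprime c) = EuclideanSpace.single 3 ((5 * c - 2) / (5 * (56 * c - 3))) := by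
  have hV : 56 * c - 3 ≠ 0 := by linarith
  have hV' : 7 * c / 18 - 1/48 = (56 * c - 3) / 144 := by ring
  ext i
  rw [bary, setIntegral_Pprime_one hc, setIntegral_Pprime_id hc, PiLp.smul_apply,
    PiLp.single_apply, PiLp.single_apply]
  split_ifs
  · rw [hV', smul_eq_mul]
    field_simp
    ring
  · simp

/-- The barycenter identity verifying the criterion of Theorem 1.2 for the
decomposition in Corollary 1.3: for `c₀ = 1/2 + (1/4)√(5/7)`, both `c₀` and
`1 − c₀` lie in `(1/4, 3/4)` and `b(P'(c₀)) + b(P'(1 − c₀)) = 0`. -/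
theorem stmt15 (c₀ : ℝ) (hc₀ : c₀ = 1/2 + (1/4) * Real.sqrt (5/7)) :
    c₀ ∈ Set.Ioo (1/4 : ℝ) (3/4) ∧ (1 - c₀) ∈ Set.Ioo (1/4 : ℝ) (3/4) ∧
      bary (Pprime c₀) + bary (Pprime (1 - c₀)) = 0 := by
  have hsq : Real.sqrt (5/7) ^ 2 = 5/7 := Real.sq_sqrt (by norm_num)
  have hpos : 0 ≤ Real.sqrt (5/7) := Real.sqrt_nonneg _
  have hlt : Real.sqrt (5/7) < 1 := by nlinarith
  have hroot : 112 * c₀ ^ 2 - 112 * c₀ + 23 = 0 := by rw [hc₀]; linear_combination 7 * hsq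
  refine ⟨⟨by linarith, by linarith⟩, ⟨by linarith, by linarith⟩, ?_⟩
  rw [bary_Pprime (by linarith), bary_Pprime (by linarith), ← PiLp.single_add,
    PiLp.single_eq_zero_iff]
  have h₁ : 0 < 5 * (56 * c₀ - 3) := by linarith
  have h₂ : 0 < 5 * (56 * (1 - c₀) - 3) := by linarith
  rw [div_add_div _ _ h₁.ne' h₂.ne', div_eq_zero_iff]
  left
  linear_combination (-25) * hroot
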